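/- For all natural numbers a, b, c, and for every fixed k, the sequence h ↦ θ_h defined by θ_h = Σ_{l=0}^h C(a, h-l) C(a+b+c-h+l, k) C(c, l) for 0 ≤ h ≤ a+c is log-concave: θ_h^2 ≥ θ_{h-1} θ_{h+1} for 1 ≤ h ≤ a+c-1. -/

import Mathlib

/-!
`θ` is the Cauchy product of `u r = C(a, r) C(a+b+c-r, k)` and `v l = C(c, l)`, and both are
Pólya frequency sequences of order two (PF2): `C(n, ·)` and `C(·, k)` are PF2 by the ratio
recurrences of binomial coefficients, hence so is `r ↦ C(T - r, k)`, and PF2 is closed under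
pointwise products. The lower-triangular Toeplitz kernel `(x, r) ↦ u (x - r)` of a PF2 sequence
is totally positive of order two (TP2); by the Cauchy–Binet formula for `2 × 2` minors TP2
kernels compose to TP2 kernels, and composing the Toeplitz kernels of `u` and `v` gives the
Toeplitz kernel of their Cauchy product. So `θ` is PF2, in particular log-concave.
-/

open Finset

section Semiring

variable {R : Type*} [CommSemiring R]

def toeplitz (u : ℕ → R) (x r : ℕ) : R := if r ≤ x then u (x - r) else 0

def cauchyProduct (u v : ℕ → R) (n : ℕ) : R := ∑ l ∈ range (n + 1), u (n - l) * v l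

theorem sum_toeplitz_mul_toeplitz (u v : ℕ → R) {x y N : ℕ} (hyx : y ≤ x) (hxN : x < N) :
    ∑ r ∈ range N, toeplitz u x r * toeplitz v r y = cauchyProduct u v (x - y) := by
  have hsub : Ico y (x + 1) ⊆ range N := fun r hr => by
    simp only [mem_Ico, mem_range] at hr ⊢; omega
  rw [← sum_subset hsub fun r _ hr => ?_, sum_Ico_eq_sum_range, cauchyProduct,
    show x + 1 - y = x - y + 1 by omega]
  · refine sum_congr rfl fun l hl => ?_
    rw [mem_range] at hl
    simp [toeplitz, show y + l ≤ x by omega, Nat.sub_add_eq]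
  · simp only [mem_Ico, not_and_or, not_le, not_lt] at hr
    rcases hr with hr | hr
    · simp [toeplitz, show ¬y ≤ r by omega]
    · simp [toeplitz, show ¬r ≤ x by omega]

end Semiring

section OrderedSemiring

variable {R : Type*} [CommSemiring R] [PartialOrder R]

/-- Pólya frequency sequences of order two. For nonnegative sequences the condition on
adjacent minors is equivalent to log-concavity with no internal zeros. -/
def IsPF2 (u : ℕ → R) : Prop :=
  (∀ n, 0 ≤ u n) ∧ ∀ i j, i ≤ j → u i * u (j + 2) ≤ u (i + 1) * u (j + 1)

def IsTP2 {α β : Type*} [Preorder α] [Preorder β] (K : α → β → R) : Prop :=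
  (∀ x y, 0 ≤ K x y) ∧
    ∀ x x' y y', x ≤ x' → y ≤ y' → K x y' * K x' y ≤ K x y * K x' y'

theorem toeplitz_nonneg {u : ℕ → R} (hu : ∀ n, 0 ≤ u n) (x r : ℕ) :
    0 ≤ toeplitz u x r := by
  unfold toeplitz; split_ifs <;> simp [hu]

theorem IsPF2.mul_le_mul_add {u : ℕ → R} (hu : IsPF2 u) (i d e : ℕ) :
    u i * u (i + d + e) ≤ u (i + d) * u (i + e) := by
  induction d generalizing i e with
  | zero => simp
  | succ d ih =>
    cases e with
    | zero => simp [mul_comm]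
    | succ e =>
      calc u i * u (i + (d + 1) + (e + 1)) = u i * u (i + d + e + 2) := by ring_nf
        _ ≤ u (i + 1) * u (i + d + e + 1) := hu.2 i _ (by omega)
        _ = u (i + 1) * u (i + 1 + d + e) := by ring_nf
        _ ≤ u (i + 1 + d) * u (i + 1 + e) := ih (i + 1) e
        _ = u (i + (d + 1)) * u (i + (e + 1)) := by ring_nf

variable [IsOrderedRing R]

theorem IsPF2.mul {u v : ℕ → R} (hu : IsPF2 u) (hv : IsPF2 v) :
    IsPF2 (u * v) :=
  ⟨fun n => mul_nonneg (hu.1 n) (hv.1 n), fun i j hij => by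
    simpa only [Pi.mul_apply, mul_mul_mul_comm] using
      mul_le_mul (hu.2 i j hij) (hv.2 i j hij) (mul_nonneg (hv.1 _) (hv.1 _))
        (mul_nonneg (hu.1 _) (hu.1 _))⟩

theorem IsPF2.natCast {u : ℕ → ℕ} (hu : IsPF2 u) :
    IsPF2 fun n => (u n : R) :=
  ⟨fun n => Nat.cast_nonneg _, fun i j hij => by
    simpa only [Nat.cast_mul] using Nat.mono_cast (α := R) (hu.2 i j hij)⟩

theorem IsPF2.isTP2_toeplitz {u : ℕ → R} (hu : IsPF2 u) : IsTP2 (toeplitz u) := by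
  refine ⟨toeplitz_nonneg hu.1, fun x x' r t hx hrt => ?_⟩
  rcases le_or_gt t x with htx | hxt
  · obtain ⟨d, rfl⟩ := Nat.exists_eq_add_of_le hrt
    obtain ⟨i, rfl⟩ := Nat.exists_eq_add_of_le htx
    obtain ⟨e, rfl⟩ := Nat.exists_eq_add_of_le hx
    have := hu.mul_le_mul_add i d e
    simp only [toeplitz, show r + d ≤ r + d + i by omega, show r ≤ r + d + i by omega,
      show r + d ≤ r + d + i + e by omega, show r ≤ r + d + i + e by omega, if_true]
    convert this using 3 <;> omega
  · simp only [toeplitz, if_neg (show ¬t ≤ x by omega), zero_mul]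
    exact mul_nonneg (toeplitz_nonneg hu.1 _ _) (toeplitz_nonneg hu.1 _ _)

end OrderedSemiring

section OrderedRing

variable {R : Type*} [CommRing R] [LinearOrder R] [IsStrictOrderedRing R]

theorem IsTP2.sum_mul {α ι β : Type*} [Preorder α] [LinearOrder ι] [Preorder β]
    {K : α → ι → R} {L : ι → β → R} (hK : IsTP2 K) (hL : IsTP2 L) (s : Finset ι) :
    IsTP2 fun x y => ∑ r ∈ s, K x r * L r y := by
  refine ⟨fun x y => sum_nonneg fun r _ => mul_nonneg (hK.1 x r) (hL.1 r y),
    fun x x' y y' hx hy => ?_⟩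
  have hminors : ∀ r t,
      0 ≤ (K x r * K x' t - K x t * K x' r) * (L r y * L t y' - L r y' * L t y) := by
    intro r t
    rcases le_total r t with hrt | htr
    · exact mul_nonneg (by linear_combination hK.2 x x' r t hx hrt)
        (by linear_combination hL.2 r t y y' hrt hy)
    · exact mul_nonneg_of_nonpos_of_nonpos (by linear_combination hK.2 x x' t r hx htr)
        (by linear_combination hL.2 t r y y' htr hy)
  -- Cauchy–Binet for `2 × 2` minors: `F` sums to the minor of the composite, and
  -- `F r t + F t r` is the product of the minors of `K` and `L` at the pair `r, t`.
  set F : ι → ι → R := fun r t =>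
    K x r * L r y * (K x' t * L t y') - K x r * L r y' * (K x' t * L t y)
  have hsum : ∑ r ∈ s, ∑ t ∈ s, F r t =
      (∑ r ∈ s, K x r * L r y) * (∑ r ∈ s, K x' r * L r y') -
        (∑ r ∈ s, K x r * L r y') * (∑ r ∈ s, K x' r * L r y) := by
    simp only [F, sum_mul_sum, ← sum_sub_distrib]
  have hexpand : 2 * (∑ r ∈ s, ∑ t ∈ s, F r t) = ∑ r ∈ s, ∑ t ∈ s,
      (K x r * K x' t - K x t * K x' r) * (L r y * L t y' - L r y' * L t y) := by
    rw [two_mul]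
    nth_rw 2 [sum_comm]
    simp only [← sum_add_distrib, F]
    exact sum_congr rfl fun r _ => sum_congr rfl fun t _ => by ring
  have := sum_nonneg fun r (_ : r ∈ s) => sum_nonneg fun t (_ : t ∈ s) => hminors r t
  linarith

theorem IsPF2.cauchyProduct {u v : ℕ → R} (hu : IsPF2 u) (hv : IsPF2 v) :
    IsPF2 (cauchyProduct u v) := by
  refine ⟨fun n => sum_nonneg fun l _ => mul_nonneg (hu.1 _) (hv.1 _), fun i j hij => ?_⟩
  have := (hu.isTP2_toeplitz.sum_mul hv.isTP2_toeplitz (range (j + 3))).2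
    (j + 1) (j + 2) 0 (j + 1 - i) (by omega) (by omega)
  simp only at this
  rw [sum_toeplitz_mul_toeplitz u v (by omega) (by omega),
    sum_toeplitz_mul_toeplitz u v (by omega) (by omega),
    sum_toeplitz_mul_toeplitz u v (by omega) (by omega),
    sum_toeplitz_mul_toeplitz u v (by omega) (by omega),
    show j + 1 - (j + 1 - i) = i by omega, show j + 2 - (j + 1 - i) = i + 1 by omega,
    Nat.sub_zero, Nat.sub_zero] at this
  exact this.trans_eq (mul_comm _ _)

end OrderedRing

theorem isPF2_choose (n : ℕ) : IsPF2 n.choose := by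
  refine ⟨fun _ => Nat.zero_le _, fun i j hij => Nat.le_of_mul_le_mul_right ?_
    (Nat.mul_pos i.succ_pos j.succ.succ_pos)⟩
  have hi := Nat.choose_succ_right_eq n i
  have hj := Nat.choose_succ_right_eq n (j + 1)
  calc n.choose i * n.choose (j + 2) * ((i + 1) * (j + 2))
      = n.choose i * n.choose (j + 1) * ((n - (j + 1)) * (i + 1)) := by
        linear_combination (i + 1) * n.choose i * hj
    _ ≤ n.choose i * n.choose (j + 1) * ((n - i) * (j + 2)) := by gcongr <;> omega
    _ = n.choose (i + 1) * n.choose (j + 1) * ((i + 1) * (j + 2)) := by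
        linear_combination (j + 2) * n.choose (j + 1) * hi.symm

theorem isPF2_choose_upper (k : ℕ) : IsPF2 (Nat.choose · k) := by
  refine ⟨fun _ => Nat.zero_le _, fun i j hij => Nat.le_of_mul_le_mul_right ?_
    (Nat.mul_pos i.succ_pos j.succ.succ_pos)⟩
  have hi := Nat.choose_mul_succ_eq i k
  have hj := Nat.choose_mul_succ_eq (j + 1) k
  have hk : (i + 1 - k) * (j + 2) ≤ (i + 1) * (j + 2 - k) := by
    rw [Nat.sub_mul, Nat.mul_sub]
    exact Nat.sub_le_sub_left (by nlinarith) _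
  calc i.choose k * (j + 2).choose k * ((i + 1) * (j + 2))
      = (i + 1).choose k * (j + 2).choose k * ((i + 1 - k) * (j + 2)) := by
        linear_combination (j + 2) * (j + 2).choose k * hi
    _ ≤ (i + 1).choose k * (j + 2).choose k * ((i + 1) * (j + 2 - k)) := by gcongr
    _ = (i + 1).choose k * (j + 1).choose k * ((i + 1) * (j + 2)) := by
        linear_combination (i + 1) * (i + 1).choose k * hj.symm

theorem isPF2_choose_sub (T k : ℕ) : IsPF2 fun r => (T - r).choose k := by
  refine ⟨fun _ => Nat.zero_le _, fun i j hij => ?_⟩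
  rcases Nat.eq_zero_or_pos k with rfl | hk
  · simp
  rcases le_or_gt (j + 2) T with hT | hT
  · have := (isPF2_choose_upper k).2 (T - (j + 2)) (T - (i + 2)) (by omega)
    rw [show T - (i + 2) + 2 = T - i by omega, show T - (j + 2) + 1 = T - (j + 1) by omega,
      show T - (i + 2) + 1 = T - (i + 1) by omega] at this
    simpa only [mul_comm] using this
  · simp [show T - (j + 2) = 0 by omega, Nat.choose_eq_zero_of_lt hk]

theorem theta_log_concave (a b c k : ℕ) :
    ∀ h, 1 ≤ h → h ≤ a + c - 1 →
      (∑ l ∈ Finset.range (h + 1),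
          a.choose (h - l) * (a + b + c - h + l).choose k * c.choose l) ^ 2 ≥
        (∑ l ∈ Finset.range h,
            a.choose (h - 1 - l) * (a + b + c - (h - 1) + l).choose k * c.choose l) *
        (∑ l ∈ Finset.range (h + 2),
            a.choose (h + 1 - l) * (a + b + c - (h + 1) + l).choose k * c.choose l) := by
  intro h h1 h2
  obtain ⟨n, rfl⟩ : ∃ n, h = n + 1 := ⟨h - 1, by omega⟩
  set u : ℕ → ℤ := fun r => (a.choose r * (a + b + c - r).choose k : ℕ)
  set v : ℕ → ℤ := fun l => (c.choose l : ℕ)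
  have hu : IsPF2 u := ((isPF2_choose a).mul (isPF2_choose_sub (a + b + c) k)).natCast
  have hv : IsPF2 v := (isPF2_choose c).natCast
  have hθ : ∀ m ≤ a + b + c, ((∑ l ∈ range (m + 1),
      a.choose (m - l) * (a + b + c - m + l).choose k * c.choose l : ℕ) : ℤ) =
        cauchyProduct u v m := by
    intro m hm
    push_cast [cauchyProduct, u, v]
    refine sum_congr rfl fun l hl => ?_
    rw [show a + b + c - m + l = a + b + c - (m - l) by rw [mem_range] at hl; omega]
  have := (hu.cauchyProduct hv).2 n n le_rfl
  rw [← hθ n (by omega), ← hθ (n + 1) (by omega), ← hθ (n + 2) (by omega)] at this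
  simp only [Nat.add_sub_cancel, ge_iff_le, sq]
  exact_mod_cast this
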